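/- Valencies shrink across rounds: for every n ≥ 3 and all ℓ, m ≥ 1, let val and val′ denote the set agreement valency maps on χ^ℓ(σ) and on χ^{ℓ+m}(σ), respectively. Then for every simplex τ ∈ χ^ℓ(σ) and every simplex τ′ ∈ χ^m(τ), one has val′(τ′) ⊆ val(τ). -/

import Mathlib

open scoped Classical

/-- Vertices of the ℓ-th chromatic subdivision of the standard simplex on `Fin n`. -/
def ChromV (n : ℕ) : ℕ → Type
  | 0 => Fin n
  | ℓ + 1 => Fin n × Finset (ChromV n ℓ)

instance chromVDecEq (n : ℕ) : ∀ ℓ, DecidableEq (ChromV n ℓ)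
  | 0 => inferInstanceAs (DecidableEq (Fin n))
  | ℓ + 1 =>
    letI := chromVDecEq n ℓ
    inferInstanceAs (DecidableEq (Fin n × Finset (ChromV n ℓ)))

/-- The color of a vertex of the ℓ-th chromatic subdivision. -/
def chromCol (n : ℕ) : ∀ ℓ, ChromV n ℓ → Fin n
  | 0, v => v
  | _ + 1, v => v.1

/-- `ids γ`: the set of colors of the vertices of a simplex `γ`. -/
def ids {n ℓ : ℕ} (γ : Finset (ChromV n ℓ)) : Finset (Fin n) :=
  γ.image (chromCol n ℓ)

/-- One step of standard chromatic subdivision of a set of (nonempty) simplexes. -/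
def subdiv {α : Type} {n : ℕ} (col : α → Fin n) (K : Set (Finset α)) :
    Set (Finset (Fin n × Finset α)) :=
  { s | s.Nonempty ∧
    (∀ v ∈ s, v.2 ∈ K ∧ v.1 ∈ v.2.image col) ∧
    (∀ u ∈ s, ∀ v ∈ s, u ≠ v → u.1 ≠ v.1) ∧
    (∀ u ∈ s, ∀ v ∈ s, u.2 ⊆ v.2 ∨ v.2 ⊆ u.2) ∧
    (∀ u ∈ s, ∀ v ∈ s, u.1 ∈ v.2.image col → u.2 ⊆ v.2) }

/-- The faces of a simplex `τ`: its nonempty subsets. -/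
def facesOf {α : Type} (τ : Finset α) : Set (Finset α) :=
  { s | s.Nonempty ∧ s ⊆ τ }

/-- The ℓ-th chromatic subdivision `χ^ℓ(ρ)` of a face `ρ` of σ,
as a subcomplex of `χ^ℓ(σ)`. -/
def chromSub (n : ℕ) (ρ : Finset (Fin n)) : ∀ ℓ, Set (Finset (ChromV n ℓ))
  | 0 => facesOf ρ
  | ℓ + 1 => subdiv (chromCol n ℓ) (chromSub n ρ ℓ)

/-- Iterated chromatic subdivision of a subcomplex sitting at level ℓ. -/
def iterSub (n ℓ : ℕ) : ∀ m, Set (Finset (ChromV n ℓ)) → Set (Finset (ChromV n (ℓ + m)))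
  | 0, K => K
  | m + 1, K => subdiv (chromCol n (ℓ + m)) (iterSub n ℓ m K)

/-- `χ^m(τ)` for a simplex `τ ∈ χ^ℓ(σ)`: the subcomplex of `χ^{ℓ+m}(σ)` obtained by
iterated subdivision of `τ` and its faces. -/
def subOf {n ℓ : ℕ} (m : ℕ) (τ : Finset (ChromV n ℓ)) : Set (Finset (ChromV n (ℓ + m))) :=
  iterSub n ℓ m (facesOf τ)

/-- The vertices of a subcomplex. -/
def vertexSet {n ℓ : ℕ} (L : Set (Finset (ChromV n ℓ))) : Set (ChromV n ℓ) :=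
  { v | ∃ s ∈ L, v ∈ s }

/-- `c(L)`: the set of values taken by a coloring `c` on the vertices of a subcomplex `L`. -/
def colorSet {n ℓ : ℕ} {β : Type} (c : ChromV n ℓ → β) (L : Set (Finset (ChromV n ℓ))) :
    Set β :=
  c '' vertexSet L

/-- The carrier of a simplex `γ ∈ χ^ℓ(σ)`: the smallest face `ρ` of σ with `γ ∈ χ^ℓ(ρ)`,
realized as the intersection of all such faces. -/
noncomputable def carr {n ℓ : ℕ} (γ : Finset (ChromV n ℓ)) : Finset (Fin n) :=
  Finset.univ.filter fun i => ∀ ρ : Finset (Fin n), γ ∈ chromSub n ρ ℓ → i ∈ ρ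

/-- The set agreement valency map: `val(τ) = ids(τ)` if `|τ| ≤ n-2`, else `carr(τ)`. -/
noncomputable def saVal {n ℓ : ℕ} (τ : Finset (ChromV n ℓ)) : Finset (Fin n) :=
  if τ.card ≤ n - 2 then ids τ else carr τ

/-- The weak symmetry breaking valency map: `{1}` on simplexes of dimension ≤ n-3,
`{0,1}` otherwise. -/
def wsbVal {n ℓ : ℕ} (τ : Finset (ChromV n ℓ)) : Set (Fin 2) :=
  if τ.card ≤ n - 2 then {1} else Set.univ

/-- The simplicial map on the ℓ-th chromatic subdivision induced functorially by a
map `f` on the colors/vertices of σ. -/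
def vmap (n : ℕ) (f : Fin n → Fin n) : ∀ ℓ, ChromV n ℓ → ChromV n ℓ
  | 0, v => f v
  | ℓ + 1, v => (f v.1, v.2.image (vmap n f ℓ))

/-- The order-preserving bijection between two faces `s` and `t` of σ of the same
cardinality (extended by the identity elsewhere). -/
noncomputable def opBij {n : ℕ} (s t : Finset (Fin n)) (i : Fin n) : Fin n :=
  if h : i ∈ s ∧ s.card = t.card then
    ↑(t.orderIsoOfFin rfl (Fin.cast h.2 ((s.orderIsoOfFin rfl).symm ⟨i, h.1⟩)))
  else i

/-- A coloring of `χ^L(σ)` is symmetric if it is invariant under the order-preserving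
simplicial bijections between subdivided faces of σ of the same dimension. -/
def SymmColoring {n L : ℕ} {β : Type} (b : ChromV n L → β) : Prop :=
  ∀ s t : Finset (Fin n), s.Nonempty → t.Nonempty → s ≠ t → s.card = t.card →
    ∀ v ∈ vertexSet (chromSub n s L), b (vmap n (opBij s t) L v) = b v

/-- Transport of vertices along an equality of levels. -/
def castV (n : ℕ) {a b : ℕ} (h : a = b) : ChromV n a → ChromV n b :=
  fun v => h ▸ v

/-!
Passing to a finer subdivision can only shrink colors and carriers: every vertex of
`χ^m(τ)` is built on a face of `τ`, and `χ^m(τ) ⊆ χ^{ℓ+m}(ρ)` whenever `τ ∈ χ^ℓ(ρ)`.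
Since `ids ⊆ carr`, the only remaining case is `|τ'| ≥ n - 1 > |τ|`, which cannot happen:
the colors of `τ'` are pairwise distinct and all occur in `τ`, so `|τ'| ≤ |ids τ| ≤ |τ|`.
-/

section ValencyShrinks

variable {n : ℕ}

lemma ids_subset_of_mem_chromSub {ρ : Finset (Fin n)} :
    ∀ ℓ (γ : Finset (ChromV n ℓ)), γ ∈ chromSub n ρ ℓ → ids γ ⊆ ρ
  | 0, _, h => Finset.image_subset_iff.mpr fun _ hv => h.2 hv
  | ℓ + 1, _, h => Finset.image_subset_iff.mpr fun v hv =>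
      ids_subset_of_mem_chromSub ℓ v.2 (h.2.1 v hv).1 (h.2.1 v hv).2

lemma ids_subset_carr {ℓ : ℕ} (γ : Finset (ChromV n ℓ)) : ids γ ⊆ carr γ := by
  intro i hi
  simp only [carr, Finset.mem_filter, Finset.mem_univ, true_and]
  exact fun ρ hρ => ids_subset_of_mem_chromSub ℓ γ hρ hi

lemma subdiv_mono {α : Type} (col : α → Fin n) {K K' : Set (Finset α)} (h : K ⊆ K') :
    subdiv col K ⊆ subdiv col K' :=
  fun _ hs => ⟨hs.1, fun v hv => ⟨h (hs.2.1 v hv).1, (hs.2.1 v hv).2⟩, hs.2.2⟩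

lemma iterSub_mono (ℓ : ℕ) :
    ∀ m {K K' : Set (Finset (ChromV n ℓ))}, K ⊆ K' → iterSub n ℓ m K ⊆ iterSub n ℓ m K'
  | 0, _, _, h => h
  | m + 1, _, _, h => subdiv_mono _ (iterSub_mono ℓ m h)

lemma facesOf_subset_chromSub {ρ : Finset (Fin n)} :
    ∀ {ℓ} {γ : Finset (ChromV n ℓ)}, γ ∈ chromSub n ρ ℓ → facesOf γ ⊆ chromSub n ρ ℓ
  | 0, _, h, _, hs => ⟨hs.1, hs.2.trans h.2⟩
  | _ + 1, _, h, _, hs =>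
      ⟨hs.1, fun v hv => h.2.1 v (hs.2 hv),
        fun u hu v hv => h.2.2.1 u (hs.2 hu) v (hs.2 hv),
        fun u hu v hv => h.2.2.2.1 u (hs.2 hu) v (hs.2 hv),
        fun u hu v hv => h.2.2.2.2 u (hs.2 hu) v (hs.2 hv)⟩

lemma iterSub_chromSub_subset (ρ : Finset (Fin n)) (ℓ : ℕ) :
    ∀ m, iterSub n ℓ m (chromSub n ρ ℓ) ⊆ chromSub n ρ (ℓ + m)
  | 0 => le_rfl
  | m + 1 => subdiv_mono _ (iterSub_chromSub_subset ρ ℓ m)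

lemma mem_chromSub_of_mem_subOf {ℓ m : ℕ} {ρ : Finset (Fin n)} {τ : Finset (ChromV n ℓ)}
    {τ' : Finset (ChromV n (ℓ + m))} (hτ : τ ∈ chromSub n ρ ℓ) (hτ' : τ' ∈ subOf m τ) :
    τ' ∈ chromSub n ρ (ℓ + m) :=
  iterSub_chromSub_subset ρ ℓ m (iterSub_mono ℓ m (facesOf_subset_chromSub hτ) hτ')

lemma carr_subset_of_mem_subOf {ℓ m : ℕ} {τ : Finset (ChromV n ℓ)}
    {τ' : Finset (ChromV n (ℓ + m))} (hτ' : τ' ∈ subOf m τ) : carr τ' ⊆ carr τ := by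
  intro i hi
  simp only [carr, Finset.mem_filter, Finset.mem_univ, true_and] at hi ⊢
  exact fun ρ hρ => hi ρ (mem_chromSub_of_mem_subOf hρ hτ')

lemma ids_subset_of_mem_subOf {ℓ : ℕ} {τ : Finset (ChromV n ℓ)} :
    ∀ m (τ' : Finset (ChromV n (ℓ + m))), τ' ∈ subOf m τ → ids τ' ⊆ ids τ
  | 0, _, h => Finset.image_subset_image h.2
  | m + 1, _, h => Finset.image_subset_iff.mpr fun v hv =>
      ids_subset_of_mem_subOf m v.2 (h.2.1 v hv).1 (h.2.1 v hv).2

lemma card_image_fst_of_mem_subdiv {α : Type} {col : α → Fin n} {K : Set (Finset α)}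
    {s : Finset (Fin n × Finset α)} (hs : s ∈ subdiv col K) : (s.image Prod.fst).card = s.card :=
  Finset.card_image_of_injOn fun u hu v hv huv => by_contra fun hne => hs.2.2.1 u hu v hv hne huv

lemma card_ids_of_mem_subOf {ℓ m : ℕ} {τ : Finset (ChromV n ℓ)}
    {τ' : Finset (ChromV n (ℓ + m))} (hm : 1 ≤ m) (hτ' : τ' ∈ subOf m τ) :
    (ids τ').card = τ'.card := by
  obtain ⟨k, rfl⟩ : ∃ k, m = k + 1 := ⟨m - 1, by omega⟩
  exact card_image_fst_of_mem_subdiv hτ'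

end ValencyShrinks

theorem saVal_shrinks_general
    (n ℓ m : ℕ) (hm : 1 ≤ m)
    (τ : Finset (ChromV n ℓ))
    (τ' : Finset (ChromV n (ℓ + m))) (hτ' : τ' ∈ subOf m τ) :
    saVal τ' ⊆ saVal τ := by
  have hids : ids τ' ⊆ ids τ := ids_subset_of_mem_subOf m τ' hτ'
  unfold saVal
  split_ifs with hτ'_small hτ_small
  · exact hids
  · exact hids.trans (ids_subset_carr τ)
  · have : τ'.card ≤ τ.card :=
      calc τ'.card = (ids τ').card := (card_ids_of_mem_subOf hm hτ').symm
        _ ≤ (ids τ).card := Finset.card_le_card hids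
        _ ≤ τ.card := Finset.card_image_le
    omega
  · exact carr_subset_of_mem_subOf hτ'

/-- Valencies shrink: for τ ∈ χ^ℓ(σ) and τ' ∈ χ^m(τ),
val'(τ') ⊆ val(τ). -/
theorem saVal_shrinks
    (n ℓ m : ℕ) (hn : 3 ≤ n) (hℓ : 1 ≤ ℓ) (hm : 1 ≤ m)
    (τ : Finset (ChromV n ℓ)) (hτ : τ ∈ chromSub n Finset.univ ℓ)
    (τ' : Finset (ChromV n (ℓ + m))) (hτ' : τ' ∈ subOf m τ) :
    saVal τ' ⊆ saVal τ :=
  saVal_shrinks_general n ℓ m hm τ τ' hτ'
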